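/- arXiv:1702.03599 — 7 statements merged into one kernel-verified Lean document; each statement's English description precedes it below -/
import Mathlib

section
/- An infinite sequence θ over a finite alphabet is eventually periodic if and only if its complexity function p(θ, ·) is eventually constant. -/
open Set

/-- The set of factors (subwords) of length `n` of the sequence `θ`. -/
def seqFactors {A : Type*} (θ : ℕ → A) (n : ℕ) : Set (List A) :=
  {w | ∃ t : ℕ, w = (List.range n).map fun k => θ (t + k)}

/-- The complexity function `p(θ, n)`: the number of distinct factors of length `n`. -/
noncomputable def seqComplexity {A : Type*} (θ : ℕ → A) (n : ℕ) : ℕ :=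
  (seqFactors θ n).ncard

section aux

variable {A : Type*}

lemma MH.factors_finite [Finite A] (θ : ℕ → A) (n : ℕ) : (seqFactors θ n).Finite := by
  apply (List.finite_length_eq A n).subset
  rintro w ⟨t, rfl⟩
  simp

lemma MH.take_window (θ : ℕ → A) (n t : ℕ) :
    ((List.range (n+1)).map fun k => θ (t + k)).take n = (List.range n).map fun k => θ (t + k) := by
  rw [← List.map_take, List.take_range, Nat.min_eq_left (by omega)]

lemma MH.image_take (θ : ℕ → A) (n : ℕ) :
    (fun w : List A => w.take n) '' seqFactors θ (n+1) = seqFactors θ n := by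
  ext w
  constructor
  · rintro ⟨v, ⟨t, rfl⟩, rfl⟩
    exact ⟨t, MH.take_window θ n t⟩
  · rintro ⟨t, rfl⟩
    exact ⟨(List.range (n+1)).map fun k => θ (t + k), ⟨t, rfl⟩, MH.take_window θ n t⟩

lemma MH.mono [Finite A] (θ : ℕ → A) : Monotone (seqComplexity θ) := by
  apply monotone_nat_of_le_succ
  intro n
  rw [seqComplexity, ← MH.image_take θ n]
  exact Set.ncard_image_le (MH.factors_finite θ (n+1))

lemma MH.window_eq (θ : ℕ → A) (n : ℕ) {t s : ℕ} (h : ∀ k < n, θ (t + k) = θ (s + k)) :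
    ((List.range n).map fun k => θ (t + k)) = (List.range n).map fun k => θ (s + k) := by
  apply List.ext_getElem
  · simp
  · intro i hi1 hi2
    simpa using h i (by simpa using hi1)

lemma MH.reduce {θ : ℕ → A} {m T : ℕ} (hT : 1 ≤ T) (hper : ∀ t : ℕ, m ≤ t → θ (t + T) = θ t) :
    ∀ t, m ≤ t → θ t = θ (m + (t - m) % T) := by
  intro t
  induction t using Nat.strong_induction_on with
  | _ t ih =>
    intro ht
    rcases lt_or_ge (t - m) T with h | h
    · rw [Nat.mod_eq_of_lt h, Nat.add_sub_cancel' ht]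
    · have htT : m ≤ t - T := by omega
      have h1 : θ t = θ (t - T) := by
        have := hper (t - T) htT
        rwa [Nat.sub_add_cancel (by omega)] at this
      rw [h1, ih (t - T) (by omega) htT]
      congr 1
      have h2 : t - m = (t - T - m) + T := by omega
      rw [h2, Nat.add_mod_right]

end aux

/-- A sequence `θ` over a finite alphabet is eventually periodic if and only if its
complexity function is eventually constant. -/
theorem stmt1 {A : Type*} [Finite A] (θ : ℕ → A) :
    (∃ m T : ℕ, 1 ≤ T ∧ ∀ t : ℕ, m ≤ t → θ (t + T) = θ t) ↔
      (∃ n₀ C : ℕ, ∀ n : ℕ, n₀ ≤ n → seqComplexity θ n = C) := by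
  constructor
  · rintro ⟨m, T, hT, hper⟩
    -- complexity is bounded by m + T
    have hbd : ∀ n, seqComplexity θ n ≤ m + T := by
      intro n
      have hsub : seqFactors θ n ⊆
          (fun t => (List.range n).map fun k => θ (t + k)) '' ↑(Finset.range (m + T)) := by
        rintro w ⟨t, rfl⟩
        rcases lt_or_ge t (m + T) with h | h
        · exact ⟨t, by simpa using h, rfl⟩
        · have hmlt := Nat.mod_lt (t - m) (show 0 < T by omega)
          refine ⟨m + (t - m) % T, by simp; omega, ?_⟩
          apply MH.window_eq
          intro k _
          have h1 := MH.reduce hT hper (t + k) (by omega)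
          have h2 := MH.reduce hT hper (m + (t - m) % T + k) (by omega)
          rw [h1, h2]
          congr 2
          have e1 : t + k - m = (t - m) + k := by omega
          have e2 : m + (t - m) % T + k - m = (t - m) % T + k := by omega
          rw [e1, e2, Nat.mod_add_mod]
      refine le_trans (Set.ncard_le_ncard hsub
        ((Finset.range (m + T)).finite_toSet.image _)) ?_
      refine le_trans (Set.ncard_image_le (Finset.range (m + T)).finite_toSet) ?_
      rw [Set.ncard_coe_finset, Finset.card_range]
    -- monotone bounded ⇒ eventually constant
    have hbdd : BddAbove (Set.range (seqComplexity θ)) := ⟨m + T, by rintro x ⟨n, rfl⟩; exact hbd n⟩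
    have hmem := Nat.sSup_mem (Set.range_nonempty _) hbdd
    obtain ⟨n₀, hn₀⟩ := hmem
    refine ⟨n₀, seqComplexity θ n₀, fun n hn => ?_⟩
    exact le_antisymm (hn₀ ▸ le_csSup hbdd ⟨n, rfl⟩) (MH.mono θ hn)
  · rintro ⟨n₀, C, hC⟩
    set n := n₀ with hn
    -- p(n) = p(n+1), so take : F(n+1) → F(n) is injective
    have hcard : ((fun w : List A => w.take n) '' seqFactors θ (n+1)).encard
        = (seqFactors θ (n+1)).encard := by
      rw [MH.image_take θ n]
      rw [Set.Finite.encard_eq_coe_toFinset_card (MH.factors_finite θ n),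
        Set.Finite.encard_eq_coe_toFinset_card (MH.factors_finite θ (n+1))]
      have e1 : seqComplexity θ n = seqComplexity θ (n+1) := by
        rw [hC n le_rfl, hC (n+1) (by omega)]
      rw [seqComplexity, seqComplexity, Set.ncard_eq_toFinset_card _ (MH.factors_finite θ n),
        Set.ncard_eq_toFinset_card _ (MH.factors_finite θ (n+1))] at e1
      exact_mod_cast e1
    have hinj : Set.InjOn (fun w : List A => w.take n) (seqFactors θ (n+1)) :=
      Set.Finite.injOn_of_encard_image_eq (MH.factors_finite θ (n+1)) hcard
    -- unique right extension
    have hext : ∀ t s : ℕ, (∀ j < n, θ (t + j) = θ (s + j)) → θ (t + n) = θ (s + n) := by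
      intro t s h
      have hw : ((List.range (n+1)).map fun k => θ (t + k))
          = (List.range (n+1)).map fun k => θ (s + k) := by
        apply hinj ⟨t, rfl⟩ ⟨s, rfl⟩
        simp only [MH.take_window]
        exact MH.window_eq θ n h
      have := congrArg (fun l : List A => l[n]?) hw
      simpa using this
    -- propagate equality of windows forward
    have hstep : ∀ t s : ℕ, (∀ j < n, θ (t + j) = θ (s + j)) →
        (∀ j < n, θ (t + 1 + j) = θ (s + 1 + j)) := by
      intro t s h j hj
      rcases Nat.lt_or_ge (j + 1) n with h' | h'
      · have := h (j + 1) h'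
        simpa [Nat.add_assoc, Nat.add_comm 1 j] using this
      · have hjn : j + 1 = n := by omega
        have := hext t s h
        have e : t + 1 + j = t + n := by omega
        have e' : s + 1 + j = s + n := by omega
        rw [e, e', this]
    have hall : ∀ t s : ℕ, (∀ j < n, θ (t + j) = θ (s + j)) → ∀ k, θ (t + k) = θ (s + k) := by
      intro t s h k
      have hk : ∀ j < n, θ (t + k + j) = θ (s + k + j) := by
        induction k with
        | zero => simpa using h
        | succ k ih =>
          have := hstep (t + k) (s + k) ih
          simpa [Nat.add_assoc, Nat.add_comm 1 k] using this
      rcases Nat.eq_zero_or_pos n with h0 | h0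
      · have := hext (t + k) (s + k) hk
        simpa [h0] using this
      · simpa using hk 0 h0
    -- pigeonhole
    obtain ⟨t1, t2, hne, heq⟩ :=
      Finite.exists_ne_map_eq_of_infinite (fun t : ℕ => (fun k : Fin n => θ (t + k)))
    wlog hlt : t1 < t2 generalizing t1 t2
    · exact this t2 t1 hne.symm heq.symm (by omega)
    have hE : ∀ j < n, θ (t1 + j) = θ (t2 + j) := by
      intro j hj
      exact congrFun heq ⟨j, hj⟩
    refine ⟨t1, t2 - t1, by omega, fun t ht => ?_⟩
    have := hall t1 t2 hE (t - t1)
    have e1 : t1 + (t - t1) = t := by omega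
    have e2 : t2 + (t - t1) = t + (t2 - t1) := by omega
    rw [e1, e2] at this
    exact this.symm
end

section
/- Let f : X → X be a piecewise contracting map on a compact metric space X with contraction pieces X₁,…,X_N satisfying the separation property (each continuous extension f_i : cl(X_i) → X is injective and the images f_i(cl(X_i)), i = 1,…,N, are pairwise disjoint). Then for every n ≥ 1, if two atoms A, B of generation n have nonempty intersection, then A = B. -/
open Set

/-- The atom of a word `w = [i₁, …, iₙ]`:
`A_{i₁…iₙ} = F_{iₙ} ∘ ⋯ ∘ F_{i₁}(X)` where `F_i(A) = closure (f '' (A ∩ P i))`. -/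
def pcAtom {X : Type*} [MetricSpace X] (f : X → X) {N : ℕ} (P : Fin N → Set X)
    (w : List (Fin N)) : Set X :=
  w.foldl (fun A i => closure (f '' (A ∩ P i))) Set.univ

/-- The discontinuity set `Δ`: points lying in the closures of two different pieces. -/
def pcDelta {X : Type*} [MetricSpace X] {N : ℕ} (P : Fin N → Set X) : Set X :=
  {y | ∃ i j : Fin N, i ≠ j ∧ y ∈ closure (P i) ∧ y ∈ closure (P j)}

/-- The word `θ_t θ_{t+1} … θ_{t+n-1}`. -/
def itinWord {N : ℕ} (θ : ℕ → Fin N) (t n : ℕ) : List (Fin N) :=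
  (List.range n).map fun k => θ (t + k)

lemma pcAtom_concat {X : Type*} [MetricSpace X] (f : X → X) {N : ℕ} (P : Fin N → Set X)
    (w : List (Fin N)) (i : Fin N) :
    pcAtom f P (w ++ [i]) = closure (f '' (pcAtom f P w ∩ P i)) := by
  simp [pcAtom, List.foldl_append]

lemma pcAtom_isClosed {X : Type*} [MetricSpace X] (f : X → X) {N : ℕ} (P : Fin N → Set X)
    (w : List (Fin N)) : IsClosed (pcAtom f P w) := by
  induction w using List.reverseRecOn with
  | nil => exact isClosed_univ
  | append_singleton v i _ => rw [pcAtom_concat]; exact isClosed_closure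

lemma atom_eq_image {X : Type*} [MetricSpace X] [CompactSpace X] {N : ℕ}
    (f : X → X) (P : Fin N → Set X) (g : Fin N → X → X)
    (hgc : ∀ i, ContinuousOn (g i) (closure (P i)))
    (hgeq : ∀ i, Set.EqOn (g i) f (P i))
    (S : Set X) (i : Fin N) :
    closure (f '' (S ∩ P i)) = g i '' closure (S ∩ P i) := by
  have hsub : S ∩ P i ⊆ closure (P i) := fun x hx => subset_closure hx.2
  have hcl : closure (S ∩ P i) ⊆ closure (P i) := closure_minimal hsub isClosed_closure
  have himg : f '' (S ∩ P i) = g i '' (S ∩ P i) :=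
    Set.image_congr fun x hx => ((hgeq i) hx.2).symm
  rw [himg]
  have hcont : ContinuousOn (g i) (closure (S ∩ P i)) := (hgc i).mono hcl
  apply Subset.antisymm
  · exact closure_minimal (image_mono subset_closure)
      ((isClosed_closure.isCompact.image_of_continuousOn hcont).isClosed)
  · exact hcont.image_closure

lemma atom_key {X : Type*} [MetricSpace X] [CompactSpace X] {N : ℕ}
    (f : X → X) (P : Fin N → Set X) (g : Fin N → X → X)
    (hg : ∀ i, ContinuousOn (g i) (closure (P i)) ∧ Set.EqOn (g i) f (P i) ∧
      Set.InjOn (g i) (closure (P i)) ∧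
      ∀ j, j ≠ i → Disjoint (g i '' closure (P i)) (g j '' closure (P j))) :
    ∀ (w w' : List (Fin N)), w.length = w'.length →
      (pcAtom f P w).Nonempty → (pcAtom f P w').Nonempty →
      (pcAtom f P w ∩ pcAtom f P w').Nonempty → pcAtom f P w = pcAtom f P w' := by
  have hgc : ∀ i, ContinuousOn (g i) (closure (P i)) := fun i => (hg i).1
  have hgeq : ∀ i, Set.EqOn (g i) f (P i) := fun i => (hg i).2.1
  intro w
  induction w using List.reverseRecOn with
  | nil =>
    intro w' hlen _ _ _
    have : w' = [] := List.length_eq_zero_iff.mp (by simpa using hlen.symm)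
    rw [this]
  | append_singleton v i ih =>
    intro w' hlen hne hne' hint
    obtain ⟨v', j, rfl⟩ : ∃ v' j, w' = v' ++ [j] := by
      rcases w'.eq_nil_or_concat with h | ⟨v', j, h⟩
      · exfalso; rw [h] at hlen; simp at hlen
      · exact ⟨v', j, by simpa [List.concat_eq_append] using h⟩
    have hA : pcAtom f P (v ++ [i]) = g i '' closure (pcAtom f P v ∩ P i) := by
      rw [pcAtom_concat, atom_eq_image f P g hgc hgeq]
    have hB : pcAtom f P (v' ++ [j]) = g j '' closure (pcAtom f P v' ∩ P j) := by
      rw [pcAtom_concat, atom_eq_image f P g hgc hgeq]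
    have hclA : closure (pcAtom f P v ∩ P i) ⊆ closure (P i) :=
      closure_minimal (fun x hx => subset_closure hx.2) isClosed_closure
    have hclB : closure (pcAtom f P v' ∩ P j) ⊆ closure (P j) :=
      closure_minimal (fun x hx => subset_closure hx.2) isClosed_closure
    obtain ⟨z, hzA, hzB⟩ := hint
    rw [hA] at hzA
    rw [hB] at hzB
    obtain ⟨x, hx, hxz⟩ := hzA
    obtain ⟨y, hy, hyz⟩ := hzB
    -- i = j
    have hij : i = j := by
      by_contra hij
      exact ((hg j).2.2.2 i hij).ne_of_mem ⟨y, hclB hy, hyz⟩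
        ⟨x, hclA hx, hxz⟩ rfl
    subst hij
    -- x = y by injectivity
    have hxy : x = y := (hg i).2.2.1 (hclA hx) (hclB hy) (by rw [hxz, hyz])
    subst hxy
    -- x belongs to both previous atoms
    have hxv : x ∈ pcAtom f P v := by
      have : closure (pcAtom f P v ∩ P i) ⊆ pcAtom f P v :=
        closure_minimal (fun _ h => h.1) (pcAtom_isClosed f P v)
      exact this hx
    have hxv' : x ∈ pcAtom f P v' := by
      have : closure (pcAtom f P v' ∩ P i) ⊆ pcAtom f P v' :=
        closure_minimal (fun _ h => h.1) (pcAtom_isClosed f P v')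
      exact this hy
    -- nonemptiness of previous atoms
    have hnev : (pcAtom f P v).Nonempty := ⟨x, hxv⟩
    have hnev' : (pcAtom f P v').Nonempty := ⟨x, hxv'⟩
    have hlen' : v.length = v'.length := by simpa using hlen
    have := ih v' hlen' hnev hnev' ⟨x, hxv, hxv'⟩
    rw [hA, hB, this]

/-- Atoms of the same generation with nonempty intersection coincide. -/
theorem stmt3
    {X : Type*} [MetricSpace X] [CompactSpace X] {N : ℕ} (hN : 2 ≤ N)
    (P : Fin N → Set X) (f : X → X) (lam : ℝ) (hlam : lam ∈ Set.Ioo (0 : ℝ) 1)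
    (hPne : ∀ i, (P i).Nonempty) (hPopen : ∀ i, IsOpen (P i))
    (hPdisj : ∀ i j, i ≠ j → Disjoint (P i) (P j))
    (hcover : (⋃ i, closure (P i)) = Set.univ)
    (hcontr : ∀ i, ∀ x ∈ P i, ∀ y ∈ P i, dist (f x) (f y) ≤ lam * dist x y)
    (hsep : ∃ g : Fin N → X → X, ∀ i,
      ContinuousOn (g i) (closure (P i)) ∧ Set.EqOn (g i) f (P i) ∧
      Set.InjOn (g i) (closure (P i)) ∧
      ∀ j, j ≠ i → Disjoint (g i '' closure (P i)) (g j '' closure (P j)))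
    (n : ℕ) (hn : 1 ≤ n) (w w' : List (Fin N))
    (hw : w.length = n) (hw' : w'.length = n)
    (hne : (pcAtom f P w).Nonempty) (hne' : (pcAtom f P w').Nonempty)
    (hint : (pcAtom f P w ∩ pcAtom f P w').Nonempty) :
    pcAtom f P w = pcAtom f P w' := by
  obtain ⟨g, hg⟩ := hsep
  exact atom_key f P g hg w w' (by rw [hw, hw']) hne hne' hint
end

section
/- Under the separation property, if two atoms of generation n are equal as sets, A_{i₁…i_n} = A_{j₁…j_n}, then their labels coincide: (i₁,…,i_n) = (j₁,…,j_n). -/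
open Set

/-- Equal atoms of the same generation have equal labels. -/
theorem stmt4
    {X : Type*} [MetricSpace X] [CompactSpace X] {N : ℕ} (hN : 2 ≤ N)
    (P : Fin N → Set X) (f : X → X) (lam : ℝ) (hlam : lam ∈ Set.Ioo (0 : ℝ) 1)
    (hPne : ∀ i, (P i).Nonempty) (hPopen : ∀ i, IsOpen (P i))
    (hPdisj : ∀ i j, i ≠ j → Disjoint (P i) (P j))
    (hcover : (⋃ i, closure (P i)) = Set.univ)
    (hcontr : ∀ i, ∀ x ∈ P i, ∀ y ∈ P i, dist (f x) (f y) ≤ lam * dist x y)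
    (hsep : ∃ g : Fin N → X → X, ∀ i,
      ContinuousOn (g i) (closure (P i)) ∧ Set.EqOn (g i) f (P i) ∧
      Set.InjOn (g i) (closure (P i)) ∧
      ∀ j, j ≠ i → Disjoint (g i '' closure (P i)) (g j '' closure (P j)))
    (n : ℕ) (hn : 1 ≤ n) (w w' : List (Fin N))
    (hw : w.length = n) (hw' : w'.length = n)
    (hne : (pcAtom f P w).Nonempty) (hne' : (pcAtom f P w').Nonempty)
    (heq : pcAtom f P w = pcAtom f P w') :
    w = w' := by
  obtain ⟨g, hg⟩ := hsep
  -- key structural facts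
  have hclosed : ∀ u : List (Fin N), IsClosed (pcAtom f P u) := by
    intro u
    rcases List.eq_nil_or_concat u with rfl | ⟨v, i, rfl⟩
    · exact isClosed_univ
    · simp only [pcAtom, List.concat_eq_append, List.foldl_append, List.foldl_cons, List.foldl_nil]
      exact isClosed_closure
  have hatom : ∀ (u : List (Fin N)) (i : Fin N),
      pcAtom f P (u ++ [i]) = g i '' closure (pcAtom f P u ∩ P i) := by
    intro u i
    have hfold : pcAtom f P (u ++ [i]) = closure (f '' (pcAtom f P u ∩ P i)) := by
      simp [pcAtom, List.foldl_append]
    have himg : f '' (pcAtom f P u ∩ P i) = g i '' (pcAtom f P u ∩ P i) :=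
      Set.image_congr fun x hx => ((hg i).2.1 hx.2).symm
    have hsubcl : closure (pcAtom f P u ∩ P i) ⊆ closure (P i) :=
      closure_mono Set.inter_subset_right
    have hcomp : IsCompact (closure (pcAtom f P u ∩ P i)) := isClosed_closure.isCompact
    have hcont : ContinuousOn (g i) (closure (pcAtom f P u ∩ P i)) :=
      (hg i).1.mono hsubcl
    have himgcomp : IsCompact (g i '' closure (pcAtom f P u ∩ P i)) :=
      hcomp.image_of_continuousOn hcont
    rw [hfold, himg]
    apply Set.Subset.antisymm
    · exact closure_minimal (Set.image_mono subset_closure) himgcomp.isClosed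
    · exact hcont.image_closure
  have hsubP : ∀ (u : List (Fin N)) (i : Fin N),
      closure (pcAtom f P u ∩ P i) ⊆ closure (P i) :=
    fun u i => closure_mono Set.inter_subset_right
  suffices H : ∀ m (w w' : List (Fin N)), w.length = m → w'.length = m →
      (pcAtom f P w ∩ pcAtom f P w').Nonempty → w = w' by
    refine H n w w' hw hw' ?_
    rw [heq, Set.inter_self]; exact hne'
  intro m
  induction m with
  | zero =>
    intro w w' hw hw' _
    rw [List.length_eq_zero_iff.mp hw, List.length_eq_zero_iff.mp hw']
  | succ m ih =>
    intro w w' hw hw' hinter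
    rcases List.eq_nil_or_concat w with rfl | ⟨u, i, rfl⟩
    · simp at hw
    rcases List.eq_nil_or_concat w' with rfl | ⟨u', i', rfl⟩
    · simp at hw'
    simp only [List.concat_eq_append] at hinter hw hw' ⊢
    rw [hatom, hatom] at hinter
    obtain ⟨x, ⟨c, hc, hcx⟩, ⟨c', hc', hcx'⟩⟩ := hinter
    have hii : i = i' := by
      by_contra hne
      have := (hg i').2.2.2 i hne
      exact this.ne_of_mem ⟨c', hsubP u' i' hc', hcx'⟩ ⟨c, hsubP u i hc, hcx⟩ rfl
    subst hii
    have hcc : c = c' :=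
      (hg i).2.2.1 (hsubP u i hc) (hsubP u' i hc') (hcx.trans hcx'.symm)
    subst hcc
    have hcu : c ∈ pcAtom f P u :=
      (closure_minimal Set.inter_subset_left (hclosed u)) hc
    have hcu' : c ∈ pcAtom f P u' :=
      (closure_minimal Set.inter_subset_left (hclosed u')) hc'
    have hu : u = u' := by
      apply ih u u' ?_ ?_ ⟨c, hcu, hcu'⟩
      · simpa using hw
      · simpa using hw'
    rw [hu]
end

section
/- Suppose f is a piecewise contracting map satisfying the separation property, x ∈ X̃ with itinerary θ, t ≥ 0, n ≥ 1. If f^{t+n}(x) ∈ A_{i₁…i_n} for some word (i₁,…,i_n), then θ_t θ_{t+1} … θ_{t+n-1} = i₁ i₂ … i_n. -/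
open Set

/-- If `f^{t+n}(x)` belongs to the atom of a word `w`, then `w` coincides with the
itinerary word `θ_t … θ_{t+n-1}`. -/
theorem stmt6
    {X : Type*} [MetricSpace X] [CompactSpace X] {N : ℕ} (hN : 2 ≤ N)
    (P : Fin N → Set X) (f : X → X) (lam : ℝ) (hlam : lam ∈ Set.Ioo (0 : ℝ) 1)
    (hPne : ∀ i, (P i).Nonempty) (hPopen : ∀ i, IsOpen (P i))
    (hPdisj : ∀ i j, i ≠ j → Disjoint (P i) (P j))
    (hcover : (⋃ i, closure (P i)) = Set.univ)
    (hcontr : ∀ i, ∀ x ∈ P i, ∀ y ∈ P i, dist (f x) (f y) ≤ lam * dist x y)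
    (hsep : ∃ g : Fin N → X → X, ∀ i,
      ContinuousOn (g i) (closure (P i)) ∧ Set.EqOn (g i) f (P i) ∧
      Set.InjOn (g i) (closure (P i)) ∧
      ∀ j, j ≠ i → Disjoint (g i '' closure (P i)) (g j '' closure (P j)))
    (x : X) (hxD : ∀ t : ℕ, f^[t] x ∉ pcDelta P)
    (θ : ℕ → Fin N) (hθ : ∀ t : ℕ, f^[t] x ∈ P (θ t))
    (t n : ℕ) (hn : 1 ≤ n) (w : List (Fin N)) (hw : w.length = n)
    (hmem : f^[t + n] x ∈ pcAtom f P w) :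
    itinWord θ t n = w := by
  obtain ⟨g, hg⟩ := hsep
  have key : ∀ (A : Set X) (i : Fin N) (s : ℕ),
      f^[s + 1] x ∈ closure (f '' (A ∩ P i)) → θ s = i ∧ f^[s] x ∈ closure A := by
    intro A i s hmem'
    set y := f^[s] x with hy_def
    have hy : y ∈ P (θ s) := hθ s
    have himg : f '' (A ∩ P i) ⊆ g i '' (closure A ∩ closure (P i)) := by
      rintro _ ⟨z, ⟨hzA, hzP⟩, rfl⟩
      exact ⟨z, ⟨subset_closure hzA, subset_closure hzP⟩, ((hg i).2.1 hzP)⟩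
    have hK : IsCompact (closure A ∩ closure (P i)) :=
      (isClosed_closure.inter isClosed_closure).isCompact
    have hKc : IsClosed (g i '' (closure A ∩ closure (P i))) :=
      (hK.image_of_continuousOn ((hg i).1.mono inter_subset_right)).isClosed
    have hfy : f y ∈ g i '' (closure A ∩ closure (P i)) := by
      rw [Function.iterate_succ_apply'] at hmem'
      exact closure_minimal himg hKc hmem'
    have heqθ : θ s = i := by
      by_contra hne
      have h1 : g (θ s) y ∈ g (θ s) '' closure (P (θ s)) := ⟨y, subset_closure hy, rfl⟩
      have h2 : g (θ s) y ∈ g i '' closure (P i) := by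
        rw [(hg (θ s)).2.1 hy]
        exact (Set.image_mono inter_subset_right) hfy
      exact ((hg (θ s)).2.2.2 i (fun h => hne h.symm)).le_bot ⟨h1, h2⟩
    have hyi : y ∈ P i := heqθ ▸ hy
    obtain ⟨z, hzK, hz⟩ := hfy
    have hzy : z = y := (hg i).2.2.1 hzK.2 (subset_closure hyi)
      (hz.trans ((hg i).2.1 hyi).symm)
    exact ⟨heqθ, hzy ▸ hzK.1⟩
  have main : ∀ w : List (Fin N), ∀ s : ℕ,
      f^[s + w.length] x ∈ closure (pcAtom f P w) → itinWord θ s w.length = w := by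
    intro w
    induction w using List.reverseRecOn with
    | nil => intro s _; simp [itinWord]
    | append_singleton v i ih =>
      intro s hmem'
      have hA : pcAtom f P (v ++ [i]) = closure (f '' (pcAtom f P v ∩ P i)) := by
        simp [pcAtom, List.foldl_append]
      rw [hA, closure_closure] at hmem'
      have hlen : (v ++ [i]).length = v.length + 1 := by simp
      rw [hlen, ← Nat.add_assoc] at hmem'
      obtain ⟨h1, h2⟩ := key (pcAtom f P v) i (s + v.length) hmem'
      have := ih s h2
      rw [hlen]
      simp only [itinWord, List.range_succ, List.map_append, List.map_cons, List.map_nil]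
      rw [show (List.range v.length).map (fun k => θ (s + k)) = itinWord θ s v.length from rfl,
        this, h1]
  have := main w t (by rw [hw]; exact subset_closure hmem)
  rwa [hw] at this
end

section
/- Let X = [0,1], c ∈ (0,1), and f a piecewise contracting map with pieces X₁ = [0,c), X₂ = (c,1], whose continuous extensions f₁, f₂ are increasing with 0 = f₂(c) < f₂(1) < f₁(0) < f₁(c) = 1. Define H_k = f^k((f(1), f(0))). If c ∉ cl(H_k) for all k ≥ 0, then H_k = (f^{k+1}(1), f^{k+1}(0)) for all k, and Λ_n = [0,1] \ ∪_{k=0}^{n-1} H_k for all n ≥ 1, where Λ₁ = cl(f(X\{c})) and Λ_{n+1} = cl(f(Λ_n \ {c})). -/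
open Set

/-- Lemma on the sets `Λ_n` of a piecewise contracting interval map with two increasing
branches: if `c` never lies in the closure of the gaps `H_k = f^k((f(1), f(0)))`, then
`H_k = (f^{k+1}(1), f^{k+1}(0))` and `Λ_n = [0,1] \ ∪_{k<n} H_k`. -/
theorem stmt14
    (lam : ℝ) (hlam : lam ∈ Set.Ioo (0 : ℝ) 1) (c : ℝ) (hc : c ∈ Set.Ioo (0 : ℝ) 1)
    (f f₁ f₂ : ℝ → ℝ)
    (hmap : Set.MapsTo f (Set.Icc 0 1) (Set.Icc 0 1))
    (hcontr1 : ∀ x ∈ Set.Ico 0 c, ∀ y ∈ Set.Ico 0 c, |f x - f y| ≤ lam * |x - y|)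
    (hcontr2 : ∀ x ∈ Set.Ioc c 1, ∀ y ∈ Set.Ioc c 1, |f x - f y| ≤ lam * |x - y|)
    (hf₁cont : ContinuousOn f₁ (Set.Icc 0 c)) (hf₂cont : ContinuousOn f₂ (Set.Icc c 1))
    (hf₁eq : Set.EqOn f₁ f (Set.Ico 0 c)) (hf₂eq : Set.EqOn f₂ f (Set.Ioc c 1))
    (hf₁mono : StrictMonoOn f₁ (Set.Icc 0 c)) (hf₂mono : StrictMonoOn f₂ (Set.Icc c 1))
    (h0 : f₂ c = 0) (h1 : 0 < f₂ 1) (h2 : f₂ 1 < f₁ 0) (h3 : f₁ c = 1)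
    (H : ℕ → Set ℝ) (hH : ∀ k : ℕ, H k = f^[k] '' Set.Ioo (f 1) (f 0))
    (hcH : ∀ k : ℕ, c ∉ closure (H k))
    (L : ℕ → Set ℝ) (hL1 : L 1 = closure (f '' (Set.Icc 0 1 \ {c})))
    (hLs : ∀ n : ℕ, 1 ≤ n → L (n + 1) = closure (f '' (L n \ {c}))) :
    (∀ k : ℕ, H k = Set.Ioo (f^[k + 1] 1) (f^[k + 1] 0)) ∧
    ∀ n : ℕ, 1 ≤ n → L n = Set.Icc 0 1 \ ⋃ k < n, H k := by
  obtain ⟨hc0, hc1⟩ := hc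
  have hmemc1 : (1:ℝ) ∈ Ioc c 1 := ⟨hc1, le_refl 1⟩
  have hmem0 : (0:ℝ) ∈ Ico 0 c := ⟨le_refl 0, hc0⟩
  have hf0 : f 0 = f₁ 0 := (hf₁eq hmem0).symm
  have hf1 : f 1 = f₂ 1 := (hf₂eq hmemc1).symm
  have hf10 : f 1 < f 0 := by rw [hf0, hf1]; exact h2
  have hf1pos : 0 < f 1 := by rw [hf1]; exact h1
  have hf0lt1 : f 0 < 1 := by
    rw [hf0, ← h3]
    exact hf₁mono ⟨le_refl 0, hc0.le⟩ ⟨hc0.le, le_refl c⟩ hc0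
  have hmono1 : MonotoneOn f₁ (Icc 0 c) := hf₁mono.monotoneOn
  have hmono2 : MonotoneOn f₂ (Icc c 1) := hf₂mono.monotoneOn
  have hbd1 : ∀ k, f^[k] 1 ∈ Icc (0:ℝ) 1 := fun k => hmap.iterate k ⟨zero_le_one, le_refl 1⟩
  have hbd0 : ∀ k, f^[k] 0 ∈ Icc (0:ℝ) 1 := fun k => hmap.iterate k ⟨le_refl 0, zero_le_one⟩
  -- image of an open interval strictly left of c
  have imgL : ∀ a b : ℝ, 0 ≤ a → a ≤ b → b < c → f '' Ioo a b = Ioo (f a) (f b) := by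
    intro a b ha hab hbc
    have hsub : Icc a b ⊆ Ico 0 c := fun x hx => ⟨ha.trans hx.1, lt_of_le_of_lt hx.2 hbc⟩
    have hsub' : Icc a b ⊆ Icc 0 c := fun x hx => ⟨(hsub hx).1, (hsub hx).2.le⟩
    have hfa : f a = f₁ a := (hf₁eq (hsub ⟨le_refl a, hab⟩)).symm
    have hfb : f b = f₁ b := (hf₁eq (hsub ⟨hab, le_refl b⟩)).symm
    have heq : EqOn f f₁ (Ioo a b) := fun x hx => (hf₁eq (hsub (Ioo_subset_Icc_self hx))).symm
    rw [heq.image_eq, hfa, hfb]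
    apply Subset.antisymm
    · rintro _ ⟨x, hx, rfl⟩
      exact ⟨hf₁mono (hsub' ⟨le_refl a, hab⟩) (hsub' (Ioo_subset_Icc_self hx)) hx.1,
        hf₁mono (hsub' (Ioo_subset_Icc_self hx)) (hsub' ⟨hab, le_refl b⟩) hx.2⟩
    · exact intermediate_value_Ioo hab (hf₁cont.mono hsub')
  -- image of an open interval strictly right of c
  have imgR : ∀ a b : ℝ, c < a → a ≤ b → b ≤ 1 → f '' Ioo a b = Ioo (f a) (f b) := by
    intro a b ha hab hb1
    have hsub : Icc a b ⊆ Ioc c 1 := fun x hx => ⟨lt_of_lt_of_le ha hx.1, hx.2.trans hb1⟩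
    have hsub' : Icc a b ⊆ Icc c 1 := fun x hx => ⟨(hsub hx).1.le, (hsub hx).2⟩
    have hfa : f a = f₂ a := (hf₂eq (hsub ⟨le_refl a, hab⟩)).symm
    have hfb : f b = f₂ b := (hf₂eq (hsub ⟨hab, le_refl b⟩)).symm
    have heq : EqOn f f₂ (Ioo a b) := fun x hx => (hf₂eq (hsub (Ioo_subset_Icc_self hx))).symm
    rw [heq.image_eq, hfa, hfb]
    apply Subset.antisymm
    · rintro _ ⟨x, hx, rfl⟩
      exact ⟨hf₂mono (hsub' ⟨le_refl a, hab⟩) (hsub' (Ioo_subset_Icc_self hx)) hx.1,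
        hf₂mono (hsub' (Ioo_subset_Icc_self hx)) (hsub' ⟨hab, le_refl b⟩) hx.2⟩
    · exact intermediate_value_Ioo hab (hf₂cont.mono hsub')
  have himgH : ∀ k, H (k+1) = f '' H k := by
    intro k
    rw [hH (k+1), Function.iterate_succ', Set.image_comp, ← hH k]
  -- Part A with nonemptiness
  have keyA : ∀ k, H k = Ioo (f^[k+1] 1) (f^[k+1] 0) ∧ f^[k+1] 1 < f^[k+1] 0 := by
    intro k
    induction k with
    | zero =>
      constructor
      · rw [hH 0]; simp
      · simpa using hf10
    | succ k ih =>
      obtain ⟨hk, hlt⟩ := ih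
      have hcc : c ∉ Icc (f^[k+1] 1) (f^[k+1] 0) := by
        have := hcH k
        rwa [hk, closure_Ioo hlt.ne] at this
      have hcase : f^[k+1] 0 < c ∨ c < f^[k+1] 1 := by
        by_contra h
        push_neg at h
        exact hcc ⟨h.2, h.1⟩
      have heq : H (k+1) = Ioo (f^[k+1+1] 1) (f^[k+1+1] 0) := by
        rw [himgH k, hk, Function.iterate_succ_apply' f (k+1) 1,
          Function.iterate_succ_apply' f (k+1) 0]
        rcases hcase with h | h
        · exact imgL _ _ (hbd1 (k+1)).1 hlt.le h
        · exact imgR _ _ h hlt.le (hbd0 (k+1)).2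
      refine ⟨heq, ?_⟩
      have hne : (Ioo (f^[k+1+1] 1) (f^[k+1+1] 0)).Nonempty := by
        rw [← heq, himgH k, hk]
        exact (Set.nonempty_Ioo.mpr hlt).image f
      exact nonempty_Ioo.mp hne
  have hab : ∀ k, f^[k+1] 1 < f^[k+1] 0 := fun k => (keyA k).2
  have hcase : ∀ k, f^[k+1] 0 < c ∨ c < f^[k+1] 1 := by
    intro k
    have hcc : c ∉ Icc (f^[k+1] 1) (f^[k+1] 0) := by
      have := hcH k
      rwa [(keyA k).1, closure_Ioo (hab k).ne] at this
    by_contra h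
    push_neg at h
    exact hcc ⟨h.2, h.1⟩
  have hH0 : H 0 = Ioo (f 1) (f 0) := by rw [hH 0]; simp
  -- f x avoids H 0
  have hnotH0 : ∀ x ∈ Icc (0:ℝ) 1, x ≠ c → f x ∉ H 0 := by
    intro x hx hxc hmem
    rw [hH0] at hmem
    rcases lt_or_gt_of_ne hxc with hlt | hgt
    · have : f 0 ≤ f x := by
        rw [hf0, ← hf₁eq ⟨hx.1, hlt⟩]
        exact hmono1 ⟨le_refl 0, hc0.le⟩ ⟨hx.1, hlt.le⟩ hx.1
      exact absurd hmem.2 (not_lt.mpr this)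
    · have : f x ≤ f 1 := by
        rw [hf1, ← hf₂eq ⟨hgt, hx.2⟩]
        exact hmono2 ⟨hgt.le, hx.2⟩ ⟨hc1.le, le_refl 1⟩ hx.2
      exact absurd hmem.1 (not_lt.mpr this)
  -- f x avoids H (k+1) if x avoids H k
  have hnotHsucc : ∀ k, ∀ x ∈ Icc (0:ℝ) 1, x ≠ c → x ∉ H k → f x ∉ H (k+1) := by
    intro k x hx hxc hxH hfxH
    have hab' : f^[k+1] 1 < f^[k+1] 0 := hab k
    have ha0 : (0:ℝ) ≤ f^[k+1] 1 := (hbd1 (k+1)).1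
    have hb1 : f^[k+1] 0 ≤ 1 := (hbd0 (k+1)).2
    rw [(keyA (k+1)).1, Function.iterate_succ_apply' f (k+1) 1,
      Function.iterate_succ_apply' f (k+1) 0] at hfxH
    rw [(keyA k).1] at hxH
    have hx' : x ≤ f^[k+1] 1 ∨ f^[k+1] 0 ≤ x := by
      by_contra h
      push_neg at h
      exact hxH ⟨h.1, h.2⟩
    rcases lt_or_gt_of_ne hxc with hxlt | hxgt <;> rcases hcase k with hHl | hHr
    · -- x < c, H k left of c
      rcases hx' with h | h
      · have : f x ≤ f (f^[k+1] 1) := by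
          calc f x = f₁ x := (hf₁eq ⟨hx.1, hxlt⟩).symm
            _ ≤ f₁ (f^[k+1] 1) := hmono1 ⟨hx.1, hxlt.le⟩ ⟨ha0, (hab'.trans hHl).le⟩ h
            _ = f (f^[k+1] 1) := hf₁eq ⟨ha0, hab'.trans hHl⟩
        exact absurd hfxH.1 (not_lt.mpr this)
      · have : f (f^[k+1] 0) ≤ f x := by
          calc f (f^[k+1] 0) = f₁ (f^[k+1] 0) := (hf₁eq ⟨ha0.trans hab'.le, hHl⟩).symm
            _ ≤ f₁ x := hmono1 ⟨ha0.trans hab'.le, hHl.le⟩ ⟨hx.1, hxlt.le⟩ h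
            _ = f x := hf₁eq ⟨hx.1, hxlt⟩
        exact absurd hfxH.2 (not_lt.mpr this)
    · -- x < c, H k right of c
      have hb2 : f (f^[k+1] 0) ≤ f 1 := by
        calc f (f^[k+1] 0) = f₂ (f^[k+1] 0) := (hf₂eq ⟨hHr.trans hab', hb1⟩).symm
          _ ≤ f₂ 1 := hmono2 ⟨(hHr.trans hab').le, hb1⟩ ⟨hc1.le, le_refl 1⟩ hb1
          _ = f 1 := hf₂eq hmemc1
      have hb3 : f 0 ≤ f x := by
        calc f 0 = f₁ 0 := hf0
          _ ≤ f₁ x := hmono1 ⟨le_refl 0, hc0.le⟩ ⟨hx.1, hxlt.le⟩ hx.1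
          _ = f x := hf₁eq ⟨hx.1, hxlt⟩
      exact absurd hfxH.2 (not_lt.mpr (by linarith))
    · -- x > c, H k left of c
      have hb2 : f 0 ≤ f (f^[k+1] 1) := by
        calc f 0 = f₁ 0 := hf0
          _ ≤ f₁ (f^[k+1] 1) := hmono1 ⟨le_refl 0, hc0.le⟩ ⟨ha0, (hab'.trans hHl).le⟩ ha0
          _ = f (f^[k+1] 1) := hf₁eq ⟨ha0, hab'.trans hHl⟩
      have hb3 : f x ≤ f 1 := by
        calc f x = f₂ x := (hf₂eq ⟨hxgt, hx.2⟩).symm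
          _ ≤ f₂ 1 := hmono2 ⟨hxgt.le, hx.2⟩ ⟨hc1.le, le_refl 1⟩ hx.2
          _ = f 1 := hf₂eq hmemc1
      exact absurd hfxH.1 (not_lt.mpr (by linarith))
    · -- x > c, H k right of c
      rcases hx' with h | h
      · have : f x ≤ f (f^[k+1] 1) := by
          calc f x = f₂ x := (hf₂eq ⟨hxgt, hx.2⟩).symm
            _ ≤ f₂ (f^[k+1] 1) := hmono2 ⟨hxgt.le, hx.2⟩ ⟨hHr.le, hab'.le.trans hb1⟩ h
            _ = f (f^[k+1] 1) := hf₂eq ⟨hHr, hab'.le.trans hb1⟩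
        exact absurd hfxH.1 (not_lt.mpr this)
      · have : f (f^[k+1] 0) ≤ f x := by
          calc f (f^[k+1] 0) = f₂ (f^[k+1] 0) := (hf₂eq ⟨hHr.trans hab', hb1⟩).symm
            _ ≤ f₂ x := hmono2 ⟨(hHr.trans hab').le, hb1⟩ ⟨hxgt.le, hx.2⟩ h
            _ = f x := hf₂eq ⟨hxgt, hx.2⟩
        exact absurd hfxH.2 (not_lt.mpr this)
  -- images of the two full pieces
  have imgIcoL : f '' Ico 0 c = Ico (f 0) 1 := by
    apply Subset.antisymm
    · rintro _ ⟨x, hx, rfl⟩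
      constructor
      · calc f 0 = f₁ 0 := hf0
          _ ≤ f₁ x := hmono1 ⟨le_refl 0, hc0.le⟩ ⟨hx.1, hx.2.le⟩ hx.1
          _ = f x := hf₁eq hx
      · calc f x = f₁ x := (hf₁eq hx).symm
          _ < f₁ c := hf₁mono ⟨hx.1, hx.2.le⟩ ⟨hc0.le, le_refl c⟩ hx.2
          _ = 1 := h3
    · rintro y ⟨hy1, hy2⟩
      rcases eq_or_lt_of_le hy1 with rfl | hy1'
      · exact ⟨0, hmem0, rfl⟩
      · have hy' : y ∈ Ioo (f₁ 0) (f₁ c) := ⟨by rw [← hf0]; exact hy1', by rw [h3]; exact hy2⟩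
        obtain ⟨x, hx, hfx⟩ := intermediate_value_Ioo hc0.le hf₁cont hy'
        exact ⟨x, ⟨hx.1.le, hx.2⟩, (hf₁eq ⟨hx.1.le, hx.2⟩).symm.trans hfx⟩
  have imgIocR : f '' Ioc c 1 = Ioc 0 (f 1) := by
    apply Subset.antisymm
    · rintro _ ⟨x, hx, rfl⟩
      constructor
      · calc (0:ℝ) = f₂ c := h0.symm
          _ < f₂ x := hf₂mono ⟨le_refl c, hc1.le⟩ ⟨hx.1.le, hx.2⟩ hx.1
          _ = f x := hf₂eq hx
      · calc f x = f₂ x := (hf₂eq hx).symm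
          _ ≤ f₂ 1 := hmono2 ⟨hx.1.le, hx.2⟩ ⟨hc1.le, le_refl 1⟩ hx.2
          _ = f 1 := hf₂eq hmemc1
    · rintro y ⟨hy1, hy2⟩
      rcases eq_or_lt_of_le hy2 with heq | hy2'
      · exact ⟨1, hmemc1, heq.symm⟩
      · have hy' : y ∈ Ioo (f₂ c) (f₂ 1) := ⟨by rw [h0]; exact hy1, by rw [← hf1]; exact hy2'⟩
        obtain ⟨x, hx, hfx⟩ := intermediate_value_Ioo hc1.le hf₂cont hy'
        exact ⟨x, ⟨hx.1, hx.2.le⟩, (hf₂eq ⟨hx.1, hx.2.le⟩).symm.trans hfx⟩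
  -- base case
  have hsplit : Icc (0:ℝ) 1 \ {c} = Ico 0 c ∪ Ioc c 1 := by
    ext x
    simp only [mem_diff, mem_Icc, mem_singleton_iff, mem_union, mem_Ico, mem_Ioc]
    constructor
    · rintro ⟨⟨h0', h1'⟩, hne⟩
      rcases lt_or_gt_of_ne hne with h | h
      · exact Or.inl ⟨h0', h⟩
      · exact Or.inr ⟨h, h1'⟩
    · rintro (⟨h0', h⟩ | ⟨h, h1'⟩)
      · exact ⟨⟨h0', h.le.trans hc1.le⟩, ne_of_lt h⟩
      · exact ⟨⟨hc0.le.trans h.le, h1'⟩, ne_of_gt h⟩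
  have hbase : L 1 = Icc 0 1 \ ⋃ k < 1, H k := by
    have hU : ⋃ k < 1, H k = Ioo (f 1) (f 0) := by
      rw [show (⋃ k < 1, H k) = H 0 by simp [Nat.lt_one_iff], hH0]
    rw [hL1, hsplit, image_union, imgIcoL, imgIocR, closure_union,
      closure_Ico hf0lt1.ne, closure_Ioc hf1pos.ne, hU]
    ext x
    simp only [mem_union, mem_Icc, mem_diff, mem_Ioo, not_and, not_lt]
    constructor
    · rintro (⟨u, v⟩ | ⟨u, v⟩)
      · exact ⟨⟨le_trans (by linarith) u, v⟩, fun _ => u⟩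
      · exact ⟨⟨u, v.trans (by linarith)⟩, fun h => absurd h (not_lt.mpr v)⟩
    · rintro ⟨⟨h0', h1'⟩, himp⟩
      rcases le_or_gt x (f 1) with h | h
      · exact Or.inr ⟨h0', h⟩
      · exact Or.inl ⟨himp h, h1'⟩
  -- inductive step
  have hstep : ∀ n : ℕ, 1 ≤ n → L n = Icc 0 1 \ ⋃ k < n, H k →
      L (n+1) = Icc 0 1 \ ⋃ k < n+1, H k := by
    intro n hn ih
    rw [hLs n hn, ih]
    apply Subset.antisymm
    · apply closure_minimal
      · rintro _ ⟨x, ⟨⟨hx01, hxU⟩, hxc⟩, rfl⟩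
        have hxc' : x ≠ c := hxc
        refine ⟨hmap hx01, ?_⟩
        intro hmem
        simp only [mem_iUnion, exists_prop] at hmem
        obtain ⟨j, hj, hjx⟩ := hmem
        cases j with
        | zero => exact hnotH0 x hx01 hxc' hjx
        | succ k =>
          have hk : x ∉ H k := fun hxk =>
            hxU (mem_iUnion₂.mpr ⟨k, Nat.succ_lt_succ_iff.mp hj, hxk⟩)
          exact hnotHsucc k x hx01 hxc' hk hjx
      · exact isClosed_Icc.sdiff (isOpen_biUnion fun k _ => (keyA k).1 ▸ isOpen_Ioo)
    · rintro y ⟨hy01, hyU⟩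
      have hy' : ∀ j < n+1, y ∉ H j := fun j hj hjy => hyU (mem_iUnion₂.mpr ⟨j, hj, hjy⟩)
      have hy0 : y ∉ Ioo (f 1) (f 0) := by
        have := hy' 0 (Nat.succ_pos n)
        rwa [hH0] at this
      have hcases : y ≤ f 1 ∨ f 0 ≤ y := by
        by_contra h
        push_neg at h
        exact hy0 ⟨h.1, h.2⟩
      -- a neighborhood of c avoids all gaps below n
      have hcUn : c ∉ closure (⋃ k < n, H k) := by
        rw [closure_iUnion₂_lt_nat]
        simp only [mem_iUnion, exists_prop, not_exists, not_and]
        exact fun k _ => hcH k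
      obtain ⟨ε, hε, hball⟩ :=
        Metric.isOpen_iff.mp isClosed_closure.isOpen_compl c hcUn
      rcases hcases with hyle | hyge
      · -- y ≤ f 1 : comes from the right piece
        rcases eq_or_lt_of_le hy01.1 with heq | hypos
        · -- y = 0 : approximate from the right of c
          have htc : c < min 1 (c + ε) := lt_min hc1 (by linarith)
          have ht1 : min 1 (c + ε) ≤ 1 := min_le_left _ _
          have hsubΛ : Ioo c (min 1 (c + ε)) ⊆ (Icc 0 1 \ ⋃ k < n, H k) \ {c} := by
            intro x hx
            have hx1 : x ≤ 1 := hx.2.le.trans ht1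
            refine ⟨⟨⟨hc0.le.trans hx.1.le, hx1⟩, ?_⟩, ne_of_gt hx.1⟩
            intro hmem
            have hb : x ∈ Metric.ball c ε := by
              rw [Metric.mem_ball, Real.dist_eq, abs_lt]
              have := hx.2.trans_le (min_le_right 1 (c + ε))
              constructor <;> linarith [hx.1]
            exact hball hb (subset_closure hmem)
          have hIV : Ioo (f₂ c) (f₂ (min 1 (c + ε))) ⊆ f₂ '' Ioo c (min 1 (c + ε)) :=
            intermediate_value_Ioo htc.le (hf₂cont.mono (Icc_subset_Icc le_rfl ht1))
          have hft : 0 < f₂ (min 1 (c + ε)) := by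
            rw [← h0]
            exact hf₂mono ⟨le_refl c, hc1.le⟩ ⟨htc.le, ht1⟩ htc
          have hchain : Ioo 0 (f₂ (min 1 (c + ε))) ⊆
              f '' ((Icc 0 1 \ ⋃ k < n, H k) \ {c}) := by
            intro z hz
            obtain ⟨x, hx, hfx⟩ := hIV ⟨by rw [h0]; exact hz.1, hz.2⟩
            exact ⟨x, hsubΛ hx,
              (hf₂eq ⟨hx.1, hx.2.le.trans ht1⟩).symm.trans hfx⟩
          have h0cl : y ∈ closure (Ioo 0 (f₂ (min 1 (c + ε)))) := by
            rw [closure_Ioo hft.ne, ← heq]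
            exact ⟨le_refl 0, hft.le⟩
          exact closure_mono hchain h0cl
        · -- 0 < y ≤ f 1
          have hy2 : y ∈ Ioc 0 (f 1) := ⟨hypos, hyle⟩
          rw [← imgIocR] at hy2
          obtain ⟨x, hx, hfx⟩ := hy2
          refine subset_closure ⟨x, ⟨⟨⟨hc0.le.trans hx.1.le, hx.2⟩, ?_⟩, ne_of_gt hx.1⟩, hfx⟩
          intro hmem
          simp only [mem_iUnion, exists_prop] at hmem
          obtain ⟨k, hk, hkx⟩ := hmem
          exact hy' (k+1) (Nat.succ_lt_succ hk) (by rw [himgH k]; exact ⟨x, hkx, hfx⟩)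
      · -- f 0 ≤ y : comes from the left piece
        rcases eq_or_lt_of_le hy01.2 with heq | hylt
        · -- y = 1 : approximate from the left of c
          have htc : max 0 (c - ε) < c := max_lt hc0 (by linarith)
          have ht0 : (0:ℝ) ≤ max 0 (c - ε) := le_max_left _ _
          have hsubΛ : Ioo (max 0 (c - ε)) c ⊆ (Icc 0 1 \ ⋃ k < n, H k) \ {c} := by
            intro x hx
            have hx0 : 0 ≤ x := ht0.trans hx.1.le
            refine ⟨⟨⟨hx0, hx.2.le.trans hc1.le⟩, ?_⟩, ne_of_lt hx.2⟩
            intro hmem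
            have hb : x ∈ Metric.ball c ε := by
              rw [Metric.mem_ball, Real.dist_eq, abs_lt]
              have := (le_max_right 0 (c - ε)).trans_lt hx.1
              constructor <;> linarith [hx.2]
            exact hball hb (subset_closure hmem)
          have hIV : Ioo (f₁ (max 0 (c - ε))) (f₁ c) ⊆ f₁ '' Ioo (max 0 (c - ε)) c :=
            intermediate_value_Ioo htc.le (hf₁cont.mono (Icc_subset_Icc ht0 le_rfl))
          have hft : f₁ (max 0 (c - ε)) < 1 := by
            rw [← h3]
            exact hf₁mono ⟨ht0, htc.le⟩ ⟨hc0.le, le_refl c⟩ htc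
          have hchain : Ioo (f₁ (max 0 (c - ε))) 1 ⊆
              f '' ((Icc 0 1 \ ⋃ k < n, H k) \ {c}) := by
            intro z hz
            obtain ⟨x, hx, hfx⟩ := hIV ⟨hz.1, by rw [h3]; exact hz.2⟩
            exact ⟨x, hsubΛ hx, (hf₁eq ⟨ht0.trans hx.1.le, hx.2⟩).symm.trans hfx⟩
          have h1cl : y ∈ closure (Ioo (f₁ (max 0 (c - ε))) 1) := by
            rw [closure_Ioo hft.ne, heq]
            exact ⟨hft.le, le_refl 1⟩
          exact closure_mono hchain h1cl
        · -- f 0 ≤ y < 1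
          have hy2 : y ∈ Ico (f 0) 1 := ⟨hyge, hylt⟩
          rw [← imgIcoL] at hy2
          obtain ⟨x, hx, hfx⟩ := hy2
          refine subset_closure ⟨x, ⟨⟨⟨hx.1, hx.2.le.trans hc1.le⟩, ?_⟩, ne_of_lt hx.2⟩, hfx⟩
          intro hmem
          simp only [mem_iUnion, exists_prop] at hmem
          obtain ⟨k, hk, hkx⟩ := hmem
          exact hy' (k+1) (Nat.succ_lt_succ hk) (by rw [himgH k]; exact ⟨x, hkx, hfx⟩)
  refine ⟨fun k => (keyA k).1, ?_⟩
  intro n hn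
  induction n, hn using Nat.le_induction with
  | base => exact hbase
  | succ n hn ih => exact hstep n hn ih
end

section
/- In the setting of the previous statement (c ∉ cl(H_k) for all k), the points 0 and 1 belong to X̃ (their orbits never hit c), and every atom of generation n of f is a closed interval of the form [f^p(0), f^q(1)] for some p, q ∈ ℕ. -/
open Set

/-- The atom of a word over the two pieces `[0,c)` and `(c,1]` of `[0,1]`. -/
def atom2 (f : ℝ → ℝ) (c : ℝ) (w : List (Fin 2)) : Set ℝ :=
  w.foldl
    (fun A i => closure (f '' (A ∩ if i = 0 then Set.Ico 0 c else Set.Ioc c 1)))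
    (Set.Icc 0 1)

lemma img_Icc' {g : ℝ → ℝ} {l u a b : ℝ} (hg : ContinuousOn g (Set.Icc l u))
    (hmono : StrictMonoOn g (Set.Icc l u)) (hla : l ≤ a) (hab : a ≤ b) (hbu : b ≤ u) :
    g '' Set.Icc a b = Set.Icc (g a) (g b) := by
  have hsub : Set.Icc a b ⊆ Set.Icc l u := Set.Icc_subset_Icc hla hbu
  apply Set.Subset.antisymm
  · rintro _ ⟨x, hx, rfl⟩
    exact ⟨hmono.monotoneOn (hsub ⟨le_refl a, hab⟩) (hsub hx) hx.1,
      hmono.monotoneOn (hsub hx) (hsub ⟨hab, le_refl b⟩) hx.2⟩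
  · exact intermediate_value_Icc hab (hg.mono hsub)

lemma img_Ico' {g : ℝ → ℝ} {l u a b : ℝ} (hg : ContinuousOn g (Set.Icc l u))
    (hmono : StrictMonoOn g (Set.Icc l u)) (hla : l ≤ a) (hab : a < b) (hbu : b ≤ u) :
    closure (g '' Set.Ico a b) = Set.Icc (g a) (g b) := by
  have hsub : Set.Icc a b ⊆ Set.Icc l u := Set.Icc_subset_Icc hla hbu
  have hma : a ∈ Set.Icc l u := hsub ⟨le_refl a, hab.le⟩
  have hmb : b ∈ Set.Icc l u := hsub ⟨hab.le, le_refl b⟩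
  apply Set.Subset.antisymm
  · apply closure_minimal _ isClosed_Icc
    rintro _ ⟨x, hx, rfl⟩
    exact ⟨hmono.monotoneOn hma (hsub ⟨hx.1, hx.2.le⟩) hx.1,
      hmono.monotoneOn (hsub ⟨hx.1, hx.2.le⟩) hmb hx.2.le⟩
  · have h1 : Set.Ico (g a) (g b) ⊆ g '' Set.Ico a b :=
      intermediate_value_Ico hab.le (hg.mono hsub)
    have h2 := closure_mono h1
    rwa [closure_Ico (hmono hma hmb hab).ne] at h2

lemma img_Ioc' {g : ℝ → ℝ} {l u a b : ℝ} (hg : ContinuousOn g (Set.Icc l u))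
    (hmono : StrictMonoOn g (Set.Icc l u)) (hla : l ≤ a) (hab : a < b) (hbu : b ≤ u) :
    closure (g '' Set.Ioc a b) = Set.Icc (g a) (g b) := by
  have hsub : Set.Icc a b ⊆ Set.Icc l u := Set.Icc_subset_Icc hla hbu
  have hma : a ∈ Set.Icc l u := hsub ⟨le_refl a, hab.le⟩
  have hmb : b ∈ Set.Icc l u := hsub ⟨hab.le, le_refl b⟩
  apply Set.Subset.antisymm
  · apply closure_minimal _ isClosed_Icc
    rintro _ ⟨x, hx, rfl⟩
    exact ⟨hmono.monotoneOn hma (hsub ⟨hx.1.le, hx.2⟩) hx.1.le,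
      hmono.monotoneOn (hsub ⟨hx.1.le, hx.2⟩) hmb hx.2⟩
  · have h1 : Set.Ioc (g a) (g b) ⊆ g '' Set.Ioc a b :=
      intermediate_value_Ioc hab.le (hg.mono hsub)
    have h2 := closure_mono h1
    rwa [closure_Ioc (hmono hma hmb hab).ne] at h2

/-- In the setting of Lemma `CR_gaps`: the orbits of `0` and `1` never hit `c`, and every
nonempty atom of generation `n` is of the form `[f^p(0), f^q(1)]`. -/
theorem stmt15
    (lam : ℝ) (hlam : lam ∈ Set.Ioo (0 : ℝ) 1) (c : ℝ) (hc : c ∈ Set.Ioo (0 : ℝ) 1)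
    (f f₁ f₂ : ℝ → ℝ)
    (hmap : Set.MapsTo f (Set.Icc 0 1) (Set.Icc 0 1))
    (hcontr1 : ∀ x ∈ Set.Ico 0 c, ∀ y ∈ Set.Ico 0 c, |f x - f y| ≤ lam * |x - y|)
    (hcontr2 : ∀ x ∈ Set.Ioc c 1, ∀ y ∈ Set.Ioc c 1, |f x - f y| ≤ lam * |x - y|)
    (hf₁cont : ContinuousOn f₁ (Set.Icc 0 c)) (hf₂cont : ContinuousOn f₂ (Set.Icc c 1))
    (hf₁eq : Set.EqOn f₁ f (Set.Ico 0 c)) (hf₂eq : Set.EqOn f₂ f (Set.Ioc c 1))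
    (hf₁mono : StrictMonoOn f₁ (Set.Icc 0 c)) (hf₂mono : StrictMonoOn f₂ (Set.Icc c 1))
    (h0 : f₂ c = 0) (h1 : 0 < f₂ 1) (h2 : f₂ 1 < f₁ 0) (h3 : f₁ c = 1)
    (H : ℕ → Set ℝ) (hH : ∀ k : ℕ, H k = f^[k] '' Set.Ioo (f 1) (f 0))
    (hcH : ∀ k : ℕ, c ∉ closure (H k))
    :
    (∀ k : ℕ, f^[k] 0 ≠ c) ∧ (∀ k : ℕ, f^[k] 1 ≠ c) ∧
    ∀ n : ℕ, 1 ≤ n → ∀ w : List (Fin 2), w.length = n → (atom2 f c w).Nonempty →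
      ∃ p q : ℕ, atom2 f c w = Set.Icc (f^[p] 0) (f^[q] 1) := by
  have h0mem : (0:ℝ) ∈ Set.Icc (0:ℝ) 1 := by constructor <;> norm_num
  have h1mem : (1:ℝ) ∈ Set.Icc (0:ℝ) 1 := by constructor <;> norm_num
  have hf0 : f 0 = f₁ 0 := (hf₁eq ⟨le_refl 0, hc.1⟩).symm
  have hf1 : f 1 = f₂ 1 := (hf₂eq ⟨hc.2, le_refl 1⟩).symm
  have h10 : f 1 < f 0 := by rw [hf0, hf1]; exact h2
  -- Lipschitz continuity on each piece
  have hlip1 : ContinuousOn f (Set.Ico 0 c) := by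
    have hl : LipschitzOnWith (Real.toNNReal lam) f (Set.Ico 0 c) := by
      apply LipschitzOnWith.of_dist_le_mul
      intro x hx y hy
      calc dist (f x) (f y) = |f x - f y| := Real.dist_eq _ _
        _ ≤ lam * |x - y| := hcontr1 x hx y hy
        _ = ↑(Real.toNNReal lam) * dist x y := by
            rw [Real.coe_toNNReal lam hlam.1.le, Real.dist_eq]
    exact hl.continuousOn
  have hlip2 : ContinuousOn f (Set.Ioc c 1) := by
    have hl : LipschitzOnWith (Real.toNNReal lam) f (Set.Ioc c 1) := by
      apply LipschitzOnWith.of_dist_le_mul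
      intro x hx y hy
      calc dist (f x) (f y) = |f x - f y| := Real.dist_eq _ _
        _ ≤ lam * |x - y| := hcontr2 x hx y hy
        _ = ↑(Real.toNNReal lam) * dist x y := by
            rw [Real.coe_toNNReal lam hlam.1.le, Real.dist_eq]
    exact hl.continuousOn
  have hcont : ∀ z ∈ Set.Icc (0:ℝ) 1, z ≠ c → ContinuousWithinAt f (Set.Icc 0 1) z := by
    intro z hz hzc
    rcases lt_or_gt_of_ne hzc with h | h
    · have hcw : ContinuousWithinAt f (Set.Ico 0 c) z :=
        hlip1.continuousWithinAt ⟨hz.1, h⟩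
      have hset : Set.Icc (0:ℝ) 1 ∩ Set.Iio c = Set.Ico 0 c := by
        ext x
        simp only [Set.mem_inter_iff, Set.mem_Icc, Set.mem_Ico, Set.mem_Iio]
        constructor
        · rintro ⟨⟨hx1, _⟩, hx3⟩; exact ⟨hx1, hx3⟩
        · rintro ⟨hx1, hx2⟩; exact ⟨⟨hx1, by linarith [hc.2]⟩, hx2⟩
      exact hcw.mono_of_mem_nhdsWithin (hset ▸ inter_mem_nhdsWithin _ (Iio_mem_nhds h))
    · have hcw : ContinuousWithinAt f (Set.Ioc c 1) z :=
        hlip2.continuousWithinAt ⟨h, hz.2⟩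
      have hset : Set.Icc (0:ℝ) 1 ∩ Set.Ioi c = Set.Ioc c 1 := by
        ext x
        simp only [Set.mem_inter_iff, Set.mem_Icc, Set.mem_Ioc, Set.mem_Ioi]
        constructor
        · rintro ⟨⟨_, hx2⟩, hx3⟩; exact ⟨hx3, hx2⟩
        · rintro ⟨hx1, hx2⟩; exact ⟨⟨by linarith [hc.1], hx2⟩, hx1⟩
      exact hcw.mono_of_mem_nhdsWithin (hset ▸ inter_mem_nhdsWithin _ (Ioi_mem_nhds h))
  have hiter : ∀ m : ℕ, ∀ y ∈ Set.Icc (0:ℝ) 1, (∀ j < m, f^[j] y ≠ c) →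
      ContinuousWithinAt (f^[m]) (Set.Icc 0 1) y := by
    intro m
    induction m with
    | zero =>
        intro y _ _
        simp only [Function.iterate_zero]
        exact continuousWithinAt_id
    | succ m ihm =>
        intro y hy hj
        rw [Function.iterate_succ']
        exact ContinuousWithinAt.comp
          (hcont _ (hmap.iterate m hy) (hj m (Nat.lt_succ_self m)))
          (ihm y hy (fun j hjm => hj j (Nat.lt_succ_of_lt hjm)))
          (hmap.iterate m)
  have hsubI : Set.Ioo (f 1) (f 0) ⊆ Set.Icc (0:ℝ) 1 := by
    intro x hx
    constructor
    · linarith [(hmap h1mem).1, hx.1]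
    · linarith [(hmap h0mem).2, hx.2]
  have hkey : ∀ x0 : ℝ, x0 ∈ closure (Set.Ioo (f 1) (f 0)) → x0 ∈ Set.Icc (0:ℝ) 1 →
      ∀ m : ℕ, (∀ j < m, f^[j] x0 ≠ c) → f^[m] x0 ≠ c := by
    intro x0 hx0cl hx0mem m hj hcon
    have hcw := ((hiter m x0 hx0mem hj).mono hsubI).mem_closure_image hx0cl
    rw [hcon] at hcw
    exact hcH m (by rwa [hH m])
  have key0 : ∀ k : ℕ, f^[k] 0 ≠ c := by
    intro k
    induction k using Nat.strong_induction_on with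
    | _ k ih =>
      rcases k with _ | m
      · simpa using hc.1.ne
      · have hj : ∀ j < m, f^[j] (f 0) ≠ c := by
          intro j hjm
          rw [← Function.iterate_succ_apply]
          exact ih (j+1) (by omega)
        have hres := hkey (f 0) (by rw [closure_Ioo h10.ne]; exact ⟨h10.le, le_refl _⟩)
          (hmap h0mem) m hj
        rw [Function.iterate_succ_apply]
        exact hres
  have key1 : ∀ k : ℕ, f^[k] 1 ≠ c := by
    intro k
    induction k using Nat.strong_induction_on with
    | _ k ih =>
      rcases k with _ | m
      · simpa using hc.2.ne'
      · have hj : ∀ j < m, f^[j] (f 1) ≠ c := by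
          intro j hjm
          rw [← Function.iterate_succ_apply]
          exact ih (j+1) (by omega)
        have hres := hkey (f 1) (by rw [closure_Ioo h10.ne]; exact ⟨le_refl _, h10.le⟩)
          (hmap h1mem) m hj
        rw [Function.iterate_succ_apply]
        exact hres
  refine ⟨key0, key1, ?_⟩
  -- atoms
  have main : ∀ w : List (Fin 2), (atom2 f c w).Nonempty →
      ∃ p q : ℕ, atom2 f c w = Set.Icc (f^[p] 0) (f^[q] 1) := by
    intro w
    induction w using List.reverseRecOn with
    | nil =>
        intro _
        exact ⟨0, 0, by simp [atom2]⟩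
    | append_singleton w i ih =>
        intro hne
        have hstep : atom2 f c (w ++ [i]) =
            closure (f '' (atom2 f c w ∩ (if i = 0 then Set.Ico 0 c else Set.Ioc c 1))) := by
          simp [atom2, List.foldl_append]
        have hAne : (atom2 f c w).Nonempty := by
          by_contra hcontra
          rw [Set.not_nonempty_iff_eq_empty] at hcontra
          rw [hstep, hcontra] at hne
          simp at hne
        obtain ⟨p, q, hA⟩ := ih hAne
        set a := f^[p] 0 with ha_def
        set b := f^[q] 1 with hb_def
        have ha01 : a ∈ Set.Icc (0:ℝ) 1 := hmap.iterate p h0mem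
        have hb01 : b ∈ Set.Icc (0:ℝ) 1 := hmap.iterate q h1mem
        have hanec : a ≠ c := key0 p
        have hbnec : b ≠ c := key1 q
        have hab : a ≤ b := by
          by_contra hcontra
          push_neg at hcontra
          rw [hstep, hA, Set.Icc_eq_empty (not_le.2 hcontra)] at hne
          simp at hne
        by_cases hi : i = 0
        · subst hi
          rw [if_pos rfl] at hstep
          rcases lt_or_gt_of_ne hanec with hac | hac
          · rcases lt_or_gt_of_ne hbnec with hbc | hbc
            · -- a ≤ b < c
              have hint : Set.Icc a b ∩ Set.Ico 0 c = Set.Icc a b := by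
                apply Set.inter_eq_left.2
                intro x hx
                exact ⟨le_trans ha01.1 hx.1, lt_of_le_of_lt hx.2 hbc⟩
              have himg : f '' Set.Icc a b = f₁ '' Set.Icc a b := by
                apply Set.image_congr
                intro x hx
                exact (hf₁eq ⟨le_trans ha01.1 hx.1, lt_of_le_of_lt hx.2 hbc⟩).symm
              refine ⟨p+1, q+1, ?_⟩
              rw [hstep, hA, hint, himg,
                img_Icc' hf₁cont hf₁mono ha01.1 hab hbc.le,
                isClosed_Icc.closure_eq,
                hf₁eq ⟨ha01.1, hac⟩, hf₁eq ⟨le_trans ha01.1 hab, hbc⟩,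
                Function.iterate_succ_apply', Function.iterate_succ_apply']
            · -- a < c < b
              have hint : Set.Icc a b ∩ Set.Ico 0 c = Set.Ico a c := by
                ext x
                simp only [Set.mem_inter_iff, Set.mem_Icc, Set.mem_Ico]
                constructor
                · rintro ⟨⟨hx1, _⟩, _, hx4⟩; exact ⟨hx1, hx4⟩
                · rintro ⟨hx1, hx2⟩
                  exact ⟨⟨hx1, by linarith⟩, by linarith [ha01.1], hx2⟩
              have himg : f '' Set.Ico a c = f₁ '' Set.Ico a c := by
                apply Set.image_congr
                intro x hx
                exact (hf₁eq ⟨le_trans ha01.1 hx.1, hx.2⟩).symm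
              refine ⟨p+1, 0, ?_⟩
              rw [hstep, hA, hint, himg,
                img_Ico' hf₁cont hf₁mono ha01.1 hac (le_refl c),
                hf₁eq ⟨ha01.1, hac⟩, h3, Function.iterate_succ_apply']
              simp
              rfl
          · -- c < a : intersection empty
            exfalso
            have hint : Set.Icc a b ∩ Set.Ico 0 c = ∅ := by
              ext x
              simp only [Set.mem_inter_iff, Set.mem_Icc, Set.mem_Ico, Set.mem_empty_iff_false,
                iff_false, not_and]
              rintro ⟨hx1, _⟩ _
              linarith
            rw [hstep, hA, hint] at hne
            simp at hne
        · rw [if_neg hi] at hstep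
          rcases lt_or_gt_of_ne hbnec with hbc | hbc
          · -- b < c : intersection empty
            exfalso
            have hint : Set.Icc a b ∩ Set.Ioc c 1 = ∅ := by
              ext x
              simp only [Set.mem_inter_iff, Set.mem_Icc, Set.mem_Ioc, Set.mem_empty_iff_false,
                iff_false, not_and]
              rintro ⟨_, hx2⟩ hx3
              linarith
            rw [hstep, hA, hint] at hne
            simp at hne
          · rcases lt_or_gt_of_ne hanec with hac | hac
            · -- a < c < b
              have hint : Set.Icc a b ∩ Set.Ioc c 1 = Set.Ioc c b := by
                ext x
                simp only [Set.mem_inter_iff, Set.mem_Icc, Set.mem_Ioc]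
                constructor
                · rintro ⟨⟨_, hx2⟩, hx3, _⟩; exact ⟨hx3, hx2⟩
                · rintro ⟨hx1, hx2⟩
                  exact ⟨⟨by linarith, hx2⟩, hx1, by linarith [hb01.2]⟩
              have himg : f '' Set.Ioc c b = f₂ '' Set.Ioc c b := by
                apply Set.image_congr
                intro x hx
                exact (hf₂eq ⟨hx.1, le_trans hx.2 hb01.2⟩).symm
              refine ⟨0, q+1, ?_⟩
              rw [hstep, hA, hint, himg,
                img_Ioc' hf₂cont hf₂mono (le_refl c) hbc hb01.2,
                h0, hf₂eq ⟨hbc, hb01.2⟩, Function.iterate_succ_apply']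
              simp
              rfl
            · -- c < a ≤ b
              have hint : Set.Icc a b ∩ Set.Ioc c 1 = Set.Icc a b := by
                apply Set.inter_eq_left.2
                intro x hx
                exact ⟨lt_of_lt_of_le hac hx.1, le_trans hx.2 hb01.2⟩
              have himg : f '' Set.Icc a b = f₂ '' Set.Icc a b := by
                apply Set.image_congr
                intro x hx
                exact (hf₂eq ⟨lt_of_lt_of_le hac hx.1, le_trans hx.2 hb01.2⟩).symm
              refine ⟨p+1, q+1, ?_⟩
              rw [hstep, hA, hint, himg,
                img_Icc' hf₂cont hf₂mono hac.le hab hb01.2,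
                isClosed_Icc.closure_eq,
                hf₂eq ⟨hac, ha01.2⟩, hf₂eq ⟨lt_of_lt_of_le hac hab, hb01.2⟩,
                Function.iterate_succ_apply', Function.iterate_succ_apply']
  intro n _ w _ hne
  exact main w hne
end

section
/- With φ as above, the image φ([c₀, c_N]) equals [φ(c₀), φ(c_N)] \ ∪_{r≥1} G_r, where G_r = (φ(ξ_r), φ(ξ_r) + λ^r], and the closures of the intervals G_r are pairwise disjoint. -/
open Set Filter

/-- `φ(x) = x + Σ_{n ≥ 1, ξ_n < x} λⁿ`. -/
noncomputable def phiMap (l : ℝ) (ξ : ℕ → ℝ) (x : ℝ) : ℝ :=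
  x + ∑' n : ℕ, if 1 ≤ n ∧ ξ n < x then l ^ n else 0

/-- The interval `G_r = (φ(ξ_r), φ(ξ_r) + λ^r]`. -/
noncomputable def gapG (l : ℝ) (ξ : ℕ → ℝ) (r : ℕ) : Set ℝ :=
  Set.Ioc (phiMap l ξ (ξ r)) (phiMap l ξ (ξ r) + l ^ r)

namespace Stmt18
variable {l : ℝ} {ξ : ℕ → ℝ}

lemma summable_of_pt (hl : l ∈ Set.Ioo (0:ℝ) 1) {f : ℕ → ℝ}
    (h : ∀ n, f n = 0 ∨ f n = l ^ n) : Summable f := by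
  refine Summable.of_nonneg_of_le (fun n => ?_) (fun n => ?_)
    (summable_geometric_of_lt_one hl.1.le hl.2)
  · rcases h n with h' | h' <;> rw [h']
    exact pow_nonneg hl.1.le n
  · rcases h n with h' | h' <;> rw [h']
    exact pow_nonneg hl.1.le n

lemma summable_f (hl : l ∈ Set.Ioo (0:ℝ) 1) (x : ℝ) :
    Summable (fun n => if 1 ≤ n ∧ ξ n < x then l ^ n else 0) :=
  summable_of_pt hl (fun n => by split_ifs <;> simp)

lemma summable_g (hl : l ∈ Set.Ioo (0:ℝ) 1) (x : ℝ) :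
    Summable (fun n => if 1 ≤ n ∧ ξ n ≤ x then l ^ n else 0) :=
  summable_of_pt hl (fun n => by split_ifs <;> simp)

lemma summable_d (hl : l ∈ Set.Ioo (0:ℝ) 1) (r : ℕ) :
    Summable (fun n => if n = r then l ^ r else (0:ℝ)) :=
  summable_of_pt hl (fun n => by split_ifs with h <;> simp [h])

lemma phi_mono (hl : l ∈ Set.Ioo (0:ℝ) 1) {x y : ℝ} (hxy : x ≤ y) :
    phiMap l ξ x ≤ phiMap l ξ y := by
  refine add_le_add hxy (Summable.tsum_le_tsum (fun n => ?_) (summable_f hl x) (summable_f hl y))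
  split_ifs with h1 h2
  · exact le_refl _
  · exact absurd ⟨h1.1, h1.2.trans_le hxy⟩ h2
  · exact pow_nonneg hl.1.le n
  · exact le_refl _

lemma phi_jump (hl : l ∈ Set.Ioo (0:ℝ) 1) {r : ℕ} (hr : 1 ≤ r) {y : ℝ} (hy : ξ r < y) :
    phiMap l ξ (ξ r) + l ^ r + (y - ξ r) ≤ phiMap l ξ y := by
  have key : (∑' n, if 1 ≤ n ∧ ξ n < ξ r then l ^ n else 0) + l ^ r ≤
      ∑' n, if 1 ≤ n ∧ ξ n < y then l ^ n else 0 := by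
    rw [← tsum_ite_eq r (fun _ => l ^ r), ← Summable.tsum_add (summable_f hl (ξ r)) (summable_d hl r)]
    refine Summable.tsum_le_tsum (fun n => ?_) ((summable_f hl (ξ r)).add (summable_d hl r))
      (summable_f hl y)
    by_cases hn : n = r
    · subst hn
      simp [lt_irrefl, hr, hy]
    · rw [if_neg hn, add_zero]
      split_ifs with h1 h2
      · exact le_refl _
      · exact absurd ⟨h1.1, h1.2.trans hy⟩ h2
      · exact pow_nonneg hl.1.le n
      · exact le_refl _
  simp only [phiMap]
  linarith

lemma phi_left_approx (hl : l ∈ Set.Ioo (0:ℝ) 1) (x : ℝ) {ε : ℝ} (hε : 0 < ε) :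
    ∃ t < x, phiMap l ξ x - ε < phiMap l ξ t := by
  set f : ℕ → ℝ := fun n => if 1 ≤ n ∧ ξ n < x then l ^ n else 0 with hf
  have hfnn : ∀ n, 0 ≤ f n := fun n => by
    simp only [hf]; split_ifs <;> simp [pow_nonneg hl.1.le]
  have hsum := summable_f (ξ := ξ) hl x
  have hS : HasSum f (∑' n, f n) := hsum.hasSum
  have hev : ∀ᶠ (s : Finset ℕ) in atTop, (∑' n, f n) - ε / 2 < ∑ n ∈ s, f n :=
    hS.eventually (eventually_gt_nhds (by linarith))
  obtain ⟨F, hF⟩ := hev.exists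
  set M : Finset ℝ := insert (x - ε / 4) ((F.filter (fun n => ξ n < x)).image ξ) with hM
  have hMne : M.Nonempty := Finset.insert_nonempty _ _
  set m := M.max' hMne with hm
  have hmlt : m < x := by
    refine Finset.max'_lt_iff M hMne |>.mpr (fun z hz => ?_)
    rw [hM] at hz
    rcases Finset.mem_insert.mp hz with h | h
    · subst h; linarith
    · obtain ⟨n, hn, rfl⟩ := Finset.mem_image.mp h
      exact (Finset.mem_filter.mp hn).2
  have hmge : x - ε / 4 ≤ m := Finset.le_max' M _ (Finset.mem_insert_self _ _)
  refine ⟨(m + x) / 2, by linarith, ?_⟩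
  have hFle : ∑ n ∈ F, f n ≤ ∑' n, (if 1 ≤ n ∧ ξ n < (m + x) / 2 then l ^ n else 0) := by
    refine le_trans (Finset.sum_le_sum (fun n _hn => ?_)) (Summable.sum_le_tsum F (fun n _ => ?_)
      (summable_f hl _))
    · show f n ≤ if 1 ≤ n ∧ ξ n < (m + x) / 2 then l ^ n else 0
      simp only [hf]
      split_ifs with h1 h2
      · exact le_refl _
      · exfalso
        apply h2
        refine ⟨h1.1, ?_⟩
        have : ξ n ≤ m := Finset.le_max' M _ (by
          rw [hM]
          exact Finset.mem_insert_of_mem (Finset.mem_image_of_mem ξ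
            (Finset.mem_filter.mpr ⟨_hn, h1.2⟩)))
        linarith
      · exact pow_nonneg hl.1.le n
      · exact le_refl _
    · split_ifs <;> simp [pow_nonneg hl.1.le]
  simp only [phiMap]
  have : (∑' n, f n) - ε / 2 < ∑' n, (if 1 ≤ n ∧ ξ n < (m + x) / 2 then l ^ n else 0) :=
    lt_of_lt_of_le hF hFle
  linarith

lemma phi_right_approx (hl : l ∈ Set.Ioo (0:ℝ) 1) {x cN : ℝ} (hx : x < cN) {ε : ℝ}
    (hε : 0 < ε) :
    ∃ t, x < t ∧ t ≤ cN ∧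
      phiMap l ξ t ≤ x + (∑' n, if 1 ≤ n ∧ ξ n ≤ x then l ^ n else 0) + ε := by
  set G : ℕ → ℝ := fun n => l ^ n with hG
  have hGsum : Summable G := summable_geometric_of_lt_one hl.1.le hl.2
  have hev : ∀ᶠ (s : Finset ℕ) in atTop, (∑' n, G n) - ε / 2 < ∑ n ∈ s, G n :=
    hGsum.hasSum.eventually (eventually_gt_nhds (by linarith))
  obtain ⟨F, hF⟩ := hev.exists
  -- the complement tail is small
  have htail : (∑' n, if n ∈ F then (0:ℝ) else l ^ n) < ε / 2 := by
    have h1 : (∑' n, if n ∈ F then (l ^ n) else (0:ℝ)) = ∑ n ∈ F, l ^ n := by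
      rw [tsum_eq_sum (s := F) (fun n hn => if_neg hn)]
      exact Finset.sum_congr rfl (fun n hn => if_pos hn)
    have hsplit : (∑' n, if n ∈ F then (l ^ n) else (0:ℝ)) +
        (∑' n, if n ∈ F then (0:ℝ) else l ^ n) = ∑' n, G n := by
      rw [← Summable.tsum_add (summable_of_pt hl (fun n => by split_ifs <;> simp))
        (summable_of_pt hl (fun n => by split_ifs <;> simp))]
      refine tsum_congr fun n => ?_
      split_ifs <;> simp [hG]
    rw [h1] at hsplit
    linarith
  -- choose t
  set T : Finset ℝ := insert (cN - x) (insert ε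
    ((F.filter (fun n => x < ξ n)).image (fun n => ξ n - x))) with hT
  have hTne : T.Nonempty := Finset.insert_nonempty _ _
  set δ := T.min' hTne with hδ
  have hδpos : 0 < δ := by
    refine Finset.lt_min'_iff T hTne |>.mpr (fun z hz => ?_)
    rw [hT] at hz
    rcases Finset.mem_insert.mp hz with h | h
    · subst h; linarith
    rcases Finset.mem_insert.mp h with h | h
    · subst h; exact hε
    · obtain ⟨n, hn, rfl⟩ := Finset.mem_image.mp h
      have := (Finset.mem_filter.mp hn).2
      linarith
  have hδcN : δ ≤ cN - x := Finset.min'_le T _ (Finset.mem_insert_self _ _)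
  have hεT : ε ∈ T := by
    rw [hT]
    exact Finset.mem_insert_of_mem (Finset.mem_insert_self _ _)
  have hδε : δ ≤ ε := Finset.min'_le T _ hεT
  refine ⟨x + δ / 2, by linarith, by linarith, ?_⟩
  have hterm : ∀ n, (if 1 ≤ n ∧ ξ n < x + δ / 2 then l ^ n else 0) ≤
      (if 1 ≤ n ∧ ξ n ≤ x then l ^ n else 0) + (if n ∈ F then (0:ℝ) else l ^ n) := by
    intro n
    by_cases h1 : 1 ≤ n ∧ ξ n < x + δ / 2
    · rw [if_pos h1]
      by_cases h2 : ξ n ≤ x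
      · rw [if_pos ⟨h1.1, h2⟩]
        have c2 : 0 ≤ if n ∈ F then (0:ℝ) else l ^ n := by
          split_ifs
          · exact le_refl _
          · exact pow_nonneg hl.1.le n
        linarith
      · push_neg at h2
        have hnF : n ∉ F := by
          intro hmem
          have hge : δ ≤ ξ n - x := Finset.min'_le T _ (by
            rw [hT]
            exact Finset.mem_insert_of_mem (Finset.mem_insert_of_mem
              (Finset.mem_image_of_mem _ (Finset.mem_filter.mpr ⟨hmem, h2⟩))))
          linarith [h1.2]
        rw [if_neg hnF, if_neg (fun h => absurd h.2 (not_le.mpr h2))]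
        simp
    · rw [if_neg h1]
      have c1 : 0 ≤ if 1 ≤ n ∧ ξ n ≤ x then l ^ n else 0 := by
        split_ifs
        · exact pow_nonneg hl.1.le n
        · exact le_refl _
      have c2 : 0 ≤ if n ∈ F then (0:ℝ) else l ^ n := by
        split_ifs
        · exact le_refl _
        · exact pow_nonneg hl.1.le n
      linarith
  have hsum_le : (∑' n, if 1 ≤ n ∧ ξ n < x + δ / 2 then l ^ n else 0) ≤
      (∑' n, if 1 ≤ n ∧ ξ n ≤ x then l ^ n else 0) + ∑' n, if n ∈ F then (0:ℝ) else l ^ n := by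
    rw [← Summable.tsum_add (summable_g hl x) (summable_of_pt hl (fun n => by split_ifs <;> simp))]
    exact Summable.tsum_le_tsum hterm (summable_f hl _) ((summable_g hl x).add
      (summable_of_pt hl (fun n => by split_ifs <;> simp)))
  simp only [phiMap]
  have : x + δ / 2 ≤ x + ε / 2 := by linarith
  linarith

lemma tsum_g_eq_of_ne (x : ℝ) (h : ∀ n, 1 ≤ n → ξ n ≠ x) :
    (∑' n, if 1 ≤ n ∧ ξ n ≤ x then l ^ n else 0) =
    ∑' n, if 1 ≤ n ∧ ξ n < x then l ^ n else 0 := by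
  refine tsum_congr fun n => ?_
  congr 1
  simp only [eq_iff_iff]
  constructor
  · rintro ⟨h1, h2⟩
    exact ⟨h1, lt_of_le_of_ne h2 (h n h1)⟩
  · rintro ⟨h1, h2⟩
    exact ⟨h1, h2.le⟩

lemma tsum_g_eq_of_eq (hl : l ∈ Set.Ioo (0:ℝ) 1) {r : ℕ} (hr : 1 ≤ r)
    (hinj : ∀ n, 1 ≤ n → ξ n = ξ r → n = r) :
    (∑' n, if 1 ≤ n ∧ ξ n ≤ ξ r then l ^ n else 0) =
    (∑' n, if 1 ≤ n ∧ ξ n < ξ r then l ^ n else 0) + l ^ r := by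
  rw [← tsum_ite_eq r (fun _ => l ^ r), ← Summable.tsum_add (summable_f hl (ξ r)) (summable_d hl r)]
  refine tsum_congr fun n => ?_
  by_cases hn : n = r
  · subst hn
    simp [hr, lt_irrefl]
  · rw [if_neg hn, add_zero]
    congr 1
    simp only [eq_iff_iff]
    constructor
    · rintro ⟨h1, h2⟩
      exact ⟨h1, lt_of_le_of_ne h2 (fun h => hn (hinj n h1 h))⟩
    · rintro ⟨h1, h2⟩
      exact ⟨h1, h2.le⟩


lemma closure_gap_disjoint_of_lt (hl : l ∈ Set.Ioo (0:ℝ) 1) {r s : ℕ} (hr : 1 ≤ r)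
    (hlt : ξ r < ξ s) :
    Disjoint (closure (gapG l ξ r)) (closure (gapG l ξ s)) := by
  have hjump := phi_jump (ξ := ξ) hl hr hlt
  have hlr : (0:ℝ) < l ^ r := pow_pos hl.1 r
  have hls : (0:ℝ) < l ^ s := pow_pos hl.1 s
  rw [gapG, gapG, closure_Ioc (by linarith : phiMap l ξ (ξ r) ≠ phiMap l ξ (ξ r) + l ^ r),
    closure_Ioc (by linarith : phiMap l ξ (ξ s) ≠ phiMap l ξ (ξ s) + l ^ s)]
  rw [Set.disjoint_left]
  rintro z ⟨_, hz1⟩ ⟨hz2, _⟩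
  linarith

end Stmt18

open Stmt18 in
/-- `φ([c₀, c_N]) = [φ(c₀), φ(c_N)] \ ∪_{r ≥ 1} G_r`, where `G_r = (φ(ξ_r), φ(ξ_r)+λ^r]`,
and the closures of the `G_r` are pairwise disjoint. -/
theorem stmt18 (l : ℝ) (hl : l ∈ Set.Ioo (0 : ℝ) 1) (c₀ cN : ℝ) (hc : c₀ < cN)
    (ξ : ℕ → ℝ) (hξmem : ∀ r : ℕ, 1 ≤ r → ξ r ∈ Set.Ioo c₀ cN)
    (hξinj : ∀ r s : ℕ, 1 ≤ r → 1 ≤ s → ξ r = ξ s → r = s) :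
    (phiMap l ξ '' Set.Icc c₀ cN =
      Set.Icc (phiMap l ξ c₀) (phiMap l ξ cN) \ ⋃ r : ℕ, ⋃ _ : 1 ≤ r, gapG l ξ r) ∧
    (∀ r s : ℕ, 1 ≤ r → 1 ≤ s → r ≠ s →
      Disjoint (closure (gapG l ξ r)) (closure (gapG l ξ s))) := by
  constructor
  · ext y
    simp only [mem_image, mem_diff, mem_iUnion, mem_Icc, not_exists, gapG, mem_Ioc]
    constructor
    · rintro ⟨x, hx, rfl⟩
      refine ⟨⟨phi_mono hl hx.1, phi_mono hl hx.2⟩, ?_⟩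
      rintro r hr ⟨h1, h2⟩
      have hxr : ξ r < x := by
        by_contra h
        push_neg at h
        exact absurd (phi_mono hl h) (not_le.mpr h1)
      have hj := phi_jump (ξ := ξ) hl hr hxr
      linarith
    · rintro ⟨⟨hy1, hy2⟩, hgap⟩
      set A := {t | t ∈ Set.Icc c₀ cN ∧ phiMap l ξ t ≤ y} with hA
      have hA0 : c₀ ∈ A := ⟨⟨le_refl _, hc.le⟩, hy1⟩
      have hAbdd : BddAbove A := ⟨cN, fun t ht => ht.1.2⟩
      set x := sSup A with hx
      have hxc0 : c₀ ≤ x := le_csSup hAbdd hA0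
      have hxcN : x ≤ cN := csSup_le ⟨_, hA0⟩ (fun t ht => ht.1.2)
      have hxle : phiMap l ξ x ≤ y := by
        by_contra h
        push_neg at h
        obtain ⟨t, ht, htφ⟩ := phi_left_approx (ξ := ξ) hl x (by linarith : (0:ℝ) < phiMap l ξ x - y)
        obtain ⟨s, hs, hts⟩ := exists_lt_of_lt_csSup ⟨_, hA0⟩ ht
        have h1 := phi_mono (ξ := ξ) hl hts.le
        have h2 := hs.2
        linarith
      refine ⟨x, ⟨hxc0, hxcN⟩, ?_⟩
      by_contra hne
      have hxlt : phiMap l ξ x < y := lt_of_le_of_ne hxle hne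
      have hxcN' : x < cN := by
        rcases lt_or_eq_of_le hxcN with h | h
        · exact h
        · rw [h] at hxlt; linarith
      have hright : ∀ t, x < t → t ≤ cN → y < phiMap l ξ t := by
        intro t h1 h2
        by_contra h
        push_neg at h
        have : t ∈ A := ⟨⟨hxc0.trans h1.le, h2⟩, h⟩
        exact absurd (le_csSup hAbdd this) (not_le.mpr h1)
      by_cases hcase : ∃ r, 1 ≤ r ∧ ξ r = x
      · obtain ⟨r, hr, hrx⟩ := hcase
        refine hgap r hr ⟨?_, ?_⟩
        · rw [hrx]; exact hxlt
        · rw [hrx]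
          by_contra h
          push_neg at h
          obtain ⟨t, ht1, ht2, ht3⟩ := phi_right_approx (ξ := ξ) hl hxcN'
            (by linarith : (0:ℝ) < (y - phiMap l ξ x - l ^ r) / 2)
          rw [← hrx] at ht3
          rw [tsum_g_eq_of_eq hl hr (fun n hn h' => hξinj n r hn hr h')] at ht3
          rw [hrx] at ht3
          have hy' := hright t ht1 ht2
          simp only [phiMap] at ht3 hy' h hxlt
          linarith
      · push_neg at hcase
        obtain ⟨t, ht1, ht2, ht3⟩ := phi_right_approx (ξ := ξ) hl hxcN'
          (by linarith : (0:ℝ) < (y - phiMap l ξ x) / 2)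
        rw [tsum_g_eq_of_ne x (fun n hn => hcase n hn)] at ht3
        have hy' := hright t ht1 ht2
        simp only [phiMap] at ht3 hy' hxlt
        linarith
  · intro r s hr hs hrs
    have hne : ξ r ≠ ξ s := fun h => hrs (hξinj r s hr hs h)
    rcases lt_or_gt_of_ne hne with h | h
    · exact closure_gap_disjoint_of_lt hl hr h
    · exact (closure_gap_disjoint_of_lt hl hs h).symm
end
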